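/- Let V be a finite-dimensional real representation of SL(2,ℝ). For every v ∈ V ∖ {0} and every r ≠ 0, one has λ^max(u(r)v) ≥ −λ^max(v). -/

import Mathlib

/-!
The lower unipotent elements `l(s) = [[1, 0], [s, 1]]` never raise weights. Conjugation by the
torus rescales `s`, so for a weight vector `y` of weight `λ` the `μ`-component of `l(s) y` is
homogeneous of degree `(λ - μ) / 2` in `s > 0`. Taking `μ`-components in
`l((1 + c) s) y = l(c s) l(s) y` then writes `(1 + c) ^ ((λ - μ) / 2)` as a finite combination
of powers `c ^ b`, which is impossible when `μ > λ` (compare the behaviour at `c → 0` and, after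
`c ↦ c⁻¹`, at `c → ∞`).

Now `u(r) = l(r⁻¹) w l(r⁻¹)` with a Weyl element `w` that negates weights. For `x = l(r⁻¹) v`:
`-λ^max(v) ≤ -λ^max(x) ≤ -λ^min(x) = λ^max(w x) ≤ λ^max(u(r) v)`,
the last step because `w x = l(-r⁻¹) u(r) v`.
-/

noncomputable section

open Filter

def dTorus (t : ℝ) : Matrix.SpecialLinearGroup (Fin 2) ℝ :=
  ⟨!![Real.exp t, 0; 0, Real.exp (-t)], by
    rw [Matrix.det_fin_two_of]
    rw [← Real.exp_add, add_neg_cancel, Real.exp_zero]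
    ring⟩

def uSL2 (r : ℝ) : Matrix.SpecialLinearGroup (Fin 2) ℝ :=
  ⟨!![1, r; 0, 1], by rw [Matrix.det_fin_two_of]; ring⟩

open Topology Matrix.SpecialLinearGroup

def lSL2 (s : ℝ) : Matrix.SpecialLinearGroup (Fin 2) ℝ :=
  ⟨!![1, 0; s, 1], by rw [Matrix.det_fin_two_of]; ring⟩

def wSL2 (r : ℝ) (hr : r ≠ 0) : Matrix.SpecialLinearGroup (Fin 2) ℝ :=
  ⟨!![0, r; -r⁻¹, 0], by rw [Matrix.det_fin_two_of]; field_simp; norm_num⟩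

lemma dTorus_mul_lSL2 (t s : ℝ) :
    dTorus t * lSL2 s = lSL2 (Real.exp (-2 * t) * s) * dTorus t := by
  refine Subtype.ext ?_
  simp only [coe_mul]
  simp only [dTorus, lSL2, coe_mk, Matrix.mul_fin_two]
  have h : Real.exp (-(2 * t)) * s * Real.exp t = Real.exp (-t) * s := by
    rw [mul_right_comm, ← Real.exp_add]; ring_nf
  simp [← h]

lemma lSL2_mul_lSL2 (s s' : ℝ) : lSL2 s * lSL2 s' = lSL2 (s + s') := by
  refine Subtype.ext ?_
  simp only [coe_mul]
  simp only [lSL2, coe_mk, Matrix.mul_fin_two]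
  norm_num [add_comm]

lemma lSL2_zero : lSL2 0 = 1 :=
  Subtype.ext <| by simp [lSL2, Matrix.one_fin_two]

lemma wSL2_mul_dTorus (r : ℝ) (hr : r ≠ 0) (t : ℝ) :
    wSL2 r hr * dTorus t = dTorus (-t) * wSL2 r hr := by
  refine Subtype.ext ?_
  simp only [coe_mul]
  simp only [dTorus, wSL2, coe_mk, Matrix.mul_fin_two, neg_neg]
  norm_num [mul_comm]

lemma uSL2_eq_lSL2_mul_wSL2_mul_lSL2 (r : ℝ) (hr : r ≠ 0) :
    uSL2 r = lSL2 r⁻¹ * wSL2 r hr * lSL2 r⁻¹ := by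
  refine Subtype.ext ?_
  simp only [coe_mul]
  simp only [uSL2, lSL2, wSL2, coe_mk, Matrix.mul_fin_two]
  norm_num [hr]

section RpowSums

variable {ι : Type*}

lemma tendsto_rpow_nhdsGT_zero_of_pos {p : ℝ} (hp : 0 < p) :
    Tendsto (fun c : ℝ => c ^ p) (𝓝[>] 0) (𝓝 0) := by
  simpa [Real.zero_rpow hp.ne'] using
    (Real.continuousAt_rpow_const 0 p (Or.inr hp.le)).tendsto.mono_left nhdsWithin_le_nhds

lemma tendsto_sum_mul_rpow_sub_of_isMin (F : Finset ι) (g b : ι → ℝ) {k₀ : ι} (hk₀ : k₀ ∈ F)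
    (hmin : ∀ k ∈ F, k ≠ k₀ → b k₀ < b k) :
    Tendsto (fun c : ℝ => ∑ k ∈ F, g k * c ^ (b k - b k₀)) (𝓝[>] 0) (𝓝 (g k₀)) := by
  classical
  have hlead : g k₀ = ∑ k ∈ F, if k = k₀ then g k else 0 := by simp [hk₀]
  rw [hlead]
  refine tendsto_finsetSum _ fun k hk => ?_
  by_cases h : k = k₀
  · subst h
    simp
  · simpa [h] using
      (tendsto_rpow_nhdsGT_zero_of_pos (sub_pos.2 (hmin k hk h))).const_mul (g k)

lemma nonneg_rpow_exponents_of_tendsto (F : Finset ι) (g b : ι → ℝ) (hg : ∀ k ∈ F, g k ≠ 0)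
    (hb : Set.InjOn b F) {f : ℝ → ℝ} {L : ℝ} (hf : Tendsto f (𝓝[>] 0) (𝓝 L))
    (h : ∀ c : ℝ, 0 < c → f c = ∑ k ∈ F, g k * c ^ b k) : ∀ k ∈ F, 0 ≤ b k := by
  by_contra! ⟨k, hk, hbk⟩
  obtain ⟨k₀, hk₀, hmin⟩ := F.exists_min_image b ⟨k, hk⟩
  have hneg : b k₀ < 0 := (hmin k hk).trans_lt hbk
  have hzero : Tendsto (fun c : ℝ => c ^ (-b k₀) * f c) (𝓝[>] 0) (𝓝 0) := by
    simpa using (tendsto_rpow_nhdsGT_zero_of_pos (neg_pos.2 hneg)).mul hf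
  have hlead : Tendsto (fun c : ℝ => c ^ (-b k₀) * f c) (𝓝[>] 0) (𝓝 (g k₀)) := by
    refine (tendsto_sum_mul_rpow_sub_of_isMin F g b hk₀ fun k hk hne =>
      (hmin k hk).lt_of_ne fun heq => hne (hb hk hk₀ heq.symm)).congr' ?_
    filter_upwards [self_mem_nhdsWithin] with c (hc : 0 < c)
    rw [h c hc, Finset.mul_sum]
    refine Finset.sum_congr rfl fun k _ => ?_
    rw [mul_left_comm, ← Real.rpow_add hc, neg_add_eq_sub]
  exact hg k₀ hk₀ (tendsto_nhds_unique hlead hzero)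

lemma eq_zero_of_mul_one_add_rpow_eq_sum (F : Finset ι) (g b : ι → ℝ) (hb : Set.InjOn b F)
    {A e : ℝ} (he : e < 0) (h : ∀ c : ℝ, 0 < c → A * (1 + c) ^ e = ∑ k ∈ F, g k * c ^ b k) :
    A = 0 := by
  classical
  set F' := F.filter (g · ≠ 0)
  have hF' : ∀ k ∈ F', k ∈ F ∧ g k ≠ 0 := fun k hk => Finset.mem_filter.1 hk
  have h' : ∀ c : ℝ, 0 < c → A * (1 + c) ^ e = ∑ k ∈ F', g k * c ^ b k := fun c hc => by
    rw [h c hc, Finset.sum_filter_of_ne fun k _ hk => left_ne_zero_of_mul hk]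
  have hb' : Set.InjOn b F' := hb.mono fun k hk => (hF' k hk).1
  have hlim : Tendsto (fun c : ℝ => A * (1 + c) ^ e) (𝓝[>] 0) (𝓝 A) := by
    have hcont : ContinuousAt (fun c : ℝ => A * (1 + c) ^ e) 0 :=
      continuousAt_const.mul ((continuousAt_const.add continuousAt_id).rpow_const
        (Or.inl (by norm_num)))
    simpa using hcont.tendsto.mono_left nhdsWithin_le_nhds
  -- substituting `c = x⁻¹` turns the exponents `b k` into `e - b k`
  have hinv : ∀ x : ℝ, 0 < x → A * (1 + x) ^ e = ∑ k ∈ F', g k * x ^ (e - b k) := fun x hx => by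
    calc A * (1 + x) ^ e = A * (1 + x⁻¹) ^ e * x ^ e := by
          rw [mul_assoc, ← Real.mul_rpow (by positivity) hx.le, add_mul, one_mul,
            inv_mul_cancel₀ hx.ne', add_comm]
      _ = ∑ k ∈ F', g k * x ^ (e - b k) := by
          rw [h' _ (inv_pos.2 hx), Finset.sum_mul]
          refine Finset.sum_congr rfl fun k _ => ?_
          rw [Real.inv_rpow hx.le, ← Real.rpow_neg hx.le, mul_assoc, ← Real.rpow_add hx,
            neg_add_eq_sub]
  have hpos := nonneg_rpow_exponents_of_tendsto F' g b (fun k hk => (hF' k hk).2) hb' hlim h'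
  have hle := nonneg_rpow_exponents_of_tendsto F' g (e - b ·) (fun k hk => (hF' k hk).2)
    (fun k hk l hl hkl => hb' hk hl (sub_right_injective hkl)) hlim hinv
  have hempty : F' = ∅ := Finset.eq_empty_of_forall_notMem fun k hk => by
    linarith [hpos k hk, hle k hk]
  have h1 := h' 1 one_pos
  rw [hempty, Finset.sum_empty] at h1
  exact (mul_eq_zero.1 h1).resolve_right (Real.rpow_pos_of_pos (by norm_num) e).ne'

lemma eq_zero_of_one_add_rpow_smul_eq_sum {M : Type*} [AddCommGroup M] [Module ℝ M]
    (F : Finset ι) (b : ι → ℝ) (hb : Set.InjOn b F) (D : ι → M) {X : M} {e : ℝ} (he : e < 0)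
    (h : ∀ c : ℝ, 0 < c → (1 + c) ^ e • X = ∑ k ∈ F, c ^ b k • D k) : X = 0 := by
  refine (Module.forall_dual_apply_eq_zero_iff ℝ X).1 fun φ => ?_
  refine eq_zero_of_mul_one_add_rpow_eq_sum F (fun k => φ (D k)) b hb he fun c hc => ?_
  simpa [map_sum, mul_comm] using congrArg φ (h c hc)

end RpowSums

section WeightSpaces

variable {V : Type*} [AddCommGroup V] [Module ℝ V]
  (ρ : Matrix.SpecialLinearGroup (Fin 2) ℝ →* (V →ₗ[ℝ] V))

def weightSpace (lam : ℝ) : Submodule ℝ V :=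
  ⨅ t : ℝ, Module.End.eigenspace (ρ (dTorus t)) (Real.exp (lam * t))

variable {ρ} in
lemma mem_weightSpace {lam : ℝ} {y : V} :
    y ∈ weightSpace ρ lam ↔ ∀ t, ρ (dTorus t) y = Real.exp (lam * t) • y := by
  simp [weightSpace, Submodule.mem_iInf]

lemma iSupIndep_weightSpace : iSupIndep (weightSpace ρ) :=
  ((Module.End.eigenspaces_iSupIndep (ρ (dTorus 1))).comp Real.exp_injective).mono fun lam =>
    (iInf_le _ 1).trans_eq (by rw [mul_one]; rfl)

end WeightSpaces

lemma Function.support_nonempty_of_finsum_ne_zero {α M : Type*} [AddCommMonoid M] {f : α → M}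
    (h : ∑ᶠ i, f i ≠ 0) : (Function.support f).Nonempty := by
  by_contra! hf
  exact h (by simp [Function.support_eq_empty_iff.1 hf])

section WeightDecomposition

open Function

variable {V : Type*} [AddCommGroup V] [Module ℝ V]
  {ρ : Matrix.SpecialLinearGroup (Fin 2) ℝ →* (V →ₗ[ℝ] V)} {cp : V → ℝ → V}
  (hcp_mem : ∀ v lam, cp v lam ∈ weightSpace ρ lam)
  (hcp_fin : ∀ v, (support (cp v)).Finite)
  (hcp_sum : ∀ v, ∑ᶠ lam, cp v lam = v)
include hcp_mem hcp_fin hcp_sum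

lemma cp_eq_of_finsum_eq {v : V} {x : ℝ → V} (hfin : (support x).Finite)
    (hmem : ∀ κ, x κ ∈ weightSpace ρ κ) (hsum : ∑ᶠ κ, x κ = v) : cp v = x := by
  classical
  funext lam
  set s := (hcp_fin v).toFinset ∪ hfin.toFinset
  have hs_cp : support (cp v) ⊆ s := fun κ hκ => by simp [s, hκ]
  have hs_x : support x ⊆ s := fun κ hκ => by simp [s, hκ]
  have hzero : ∑ κ ∈ s, (cp v κ - x κ) = 0 := by
    rw [Finset.sum_sub_distrib, ← finsum_eq_sum_of_support_subset _ hs_cp,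
      ← finsum_eq_sum_of_support_subset _ hs_x, hcp_sum, hsum, sub_self]
  by_cases hlam : lam ∈ s
  · exact sub_eq_zero.1 <| (iSupIndep_iff_finsetSum_eq_zero_imp_eq_zero _).1
      (iSupIndep_weightSpace ρ) s _ (fun κ _ => sub_mem (hcp_mem v κ) (hmem κ)) hzero lam hlam
  · rw [notMem_support.1 fun h => hlam (hs_cp h), notMem_support.1 fun h => hlam (hs_x h)]

lemma cp_map_of_mapsTo (T : V →ₗ[ℝ] V) (σ : ℝ ≃ ℝ)
    (hT : ∀ κ, ∀ y ∈ weightSpace ρ κ, T y ∈ weightSpace ρ (σ κ)) (x : V) (lam : ℝ) :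
    cp (T x) (σ lam) = T (cp x lam) := by
  have hfin : (support fun κ => T (cp x (σ.symm κ))).Finite := by
    refine ((hcp_fin x).image σ).subset fun κ hκ => ⟨σ.symm κ, fun h => hκ ?_, by simp⟩
    simp [h]
  have hsum : ∑ᶠ κ, T (cp x (σ.symm κ)) = T x := by
    rw [finsum_comp_equiv σ.symm (f := fun κ => T (cp x κ)), ← map_finsum T (hcp_fin x),
      hcp_sum]
  have := cp_eq_of_finsum_eq hcp_mem hcp_fin hcp_sum hfin
    (fun κ => by simpa using hT _ _ (hcp_mem x (σ.symm κ))) hsum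
  simpa using congrFun this (σ lam)

lemma cp_smul (a : ℝ) (x : V) (lam : ℝ) : cp (a • x) lam = a • cp x lam :=
  cp_map_of_mapsTo hcp_mem hcp_fin hcp_sum (a • LinearMap.id) (Equiv.refl ℝ)
    (fun _ _ hy => Submodule.smul_mem _ a hy) x lam

lemma cp_dTorus (t : ℝ) (x : V) (lam : ℝ) :
    cp (ρ (dTorus t) x) lam = Real.exp (lam * t) • cp x lam := by
  rw [← mem_weightSpace.1 (hcp_mem x lam) t]
  refine cp_map_of_mapsTo hcp_mem hcp_fin hcp_sum _ (Equiv.refl ℝ) (fun κ y hy => ?_) x lam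
  rw [mem_weightSpace.1 hy t]
  exact Submodule.smul_mem _ _ hy

lemma cp_wSL2 {r : ℝ} (hr : r ≠ 0) (x : V) (lam : ℝ) :
    cp (ρ (wSL2 r hr) x) (-lam) = ρ (wSL2 r hr) (cp x lam) := by
  refine cp_map_of_mapsTo hcp_mem hcp_fin hcp_sum _ (Equiv.neg ℝ) (fun κ y hy => ?_) x lam
  refine mem_weightSpace.2 fun t => ?_
  rw [← Module.End.mul_apply, ← map_mul, ← neg_neg t, ← wSL2_mul_dTorus, map_mul,
    Module.End.mul_apply, mem_weightSpace.1 hy, map_smul, Equiv.neg_apply, neg_mul_neg]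

lemma cp_finset_sum {ι : Type*} (s : Finset ι) (f : ι → V) (lam : ℝ) :
    cp (∑ i ∈ s, f i) lam = ∑ i ∈ s, cp (f i) lam := by
  refine congrFun (cp_eq_of_finsum_eq hcp_mem hcp_fin hcp_sum
    (HasFiniteSupport.sum (fun i => hcp_fin (f i)) s)
    (fun κ => Submodule.sum_mem _ fun i _ => hcp_mem (f i) κ) ?_) lam
  rw [finsum_sum_comm s _ fun i _ => hcp_fin (f i)]
  exact Finset.sum_congr rfl fun i _ => hcp_sum (f i)

lemma cp_lSL2_mul_of_mem_weightSpace {lam : ℝ} {y : V} (hy : y ∈ weightSpace ρ lam) (s : ℝ)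
    {σ : ℝ} (hσ : 0 < σ) (μ : ℝ) :
    cp (ρ (lSL2 (σ * s)) y) μ = σ ^ ((lam - μ) / 2) • cp (ρ (lSL2 s) y) μ := by
  set t := -Real.log σ / 2
  have hexp : Real.exp (-2 * t) = σ := by
    rw [show -2 * t = Real.log σ by ring, Real.exp_log hσ]
  have hconj : Real.exp (μ * t) • cp (ρ (lSL2 s) y) μ =
      Real.exp (lam * t) • cp (ρ (lSL2 (σ * s)) y) μ := by
    rw [← cp_dTorus hcp_mem hcp_fin hcp_sum, ← Module.End.mul_apply, ← map_mul, dTorus_mul_lSL2,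
      hexp, map_mul, Module.End.mul_apply, mem_weightSpace.1 hy, map_smul,
      cp_smul hcp_mem hcp_fin hcp_sum]
  calc cp (ρ (lSL2 (σ * s)) y) μ
      = Real.exp (-(lam * t)) • Real.exp (lam * t) • cp (ρ (lSL2 (σ * s)) y) μ := by
        rw [smul_smul, ← Real.exp_add, neg_add_cancel, Real.exp_zero, one_smul]
    _ = σ ^ ((lam - μ) / 2) • cp (ρ (lSL2 s) y) μ := by
        rw [← hconj, smul_smul, ← Real.exp_add, Real.rpow_def_of_pos hσ]
        congr 2
        ring

lemma cp_lSL2_eq_zero_of_lt {lam μ : ℝ} {y : V} (hy : y ∈ weightSpace ρ lam) (s : ℝ)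
    (hμ : lam < μ) : cp (ρ (lSL2 s) y) μ = 0 := by
  set C := cp (ρ (lSL2 s) y)
  set S := (hcp_fin (ρ (lSL2 s) y)).toFinset
  refine eq_zero_of_one_add_rpow_smul_eq_sum S (fun κ => (κ - μ) / 2)
    (fun κ _ κ' _ h => by simpa using h) (fun κ => cp (ρ (lSL2 s) (C κ)) μ)
    (by linarith : (lam - μ) / 2 < 0) fun c hc => ?_
  -- `lSL2 ((1 + c) * s) = lSL2 (c * s) * lSL2 s`, and both sides rescale by powers of `c`
  calc (1 + c) ^ ((lam - μ) / 2) • C μ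
      = cp (ρ (lSL2 ((1 + c) * s)) y) μ :=
        (cp_lSL2_mul_of_mem_weightSpace hcp_mem hcp_fin hcp_sum hy s (by linarith) μ).symm
    _ = cp (ρ (lSL2 (c * s)) (∑ κ ∈ S, C κ)) μ := by
        rw [(finsum_eq_sum _ (hcp_fin _)).symm.trans (hcp_sum _), ← Module.End.mul_apply,
          ← map_mul, lSL2_mul_lSL2, show (1 + c) * s = c * s + s by ring]
    _ = ∑ κ ∈ S, c ^ ((κ - μ) / 2) • cp (ρ (lSL2 s) (C κ)) μ := by
        rw [map_sum, cp_finset_sum hcp_mem hcp_fin hcp_sum]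
        exact Finset.sum_congr rfl fun κ _ =>
          cp_lSL2_mul_of_mem_weightSpace hcp_mem hcp_fin hcp_sum (hcp_mem _ κ) s hc μ

lemma exists_le_of_cp_lSL2_ne_zero {x : V} {s μ : ℝ} (hμ : cp (ρ (lSL2 s) x) μ ≠ 0) :
    ∃ κ, cp x κ ≠ 0 ∧ μ ≤ κ := by
  by_contra! hlt
  refine hμ ?_
  rw [← (finsum_eq_sum _ (hcp_fin x)).symm.trans (hcp_sum x), map_sum,
    cp_finset_sum hcp_mem hcp_fin hcp_sum]
  exact Finset.sum_eq_zero fun κ hκ => cp_lSL2_eq_zero_of_lt hcp_mem hcp_fin hcp_sum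
    (hcp_mem x κ) s (hlt κ ((hcp_fin x).mem_toFinset.1 hκ))

lemma sSup_support_cp_lSL2_le {x : V} (hx : x ≠ 0) (s : ℝ) :
    sSup (support (cp (ρ (lSL2 s) x))) ≤ sSup (support (cp x)) := by
  refine csSup_le (support_nonempty_of_finsum_ne_zero ?_) fun μ hμ => ?_
  · rwa [hcp_sum, map_ne_zero_iff _ (Representation.apply_bijective ρ _).1]
  obtain ⟨κ, hκ, hμκ⟩ := exists_le_of_cp_lSL2_ne_zero hcp_mem hcp_fin hcp_sum hμ
  exact hμκ.trans (le_csSup (hcp_fin x).bddAbove hκ)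

end WeightDecomposition

theorem lambda_max_of_unipotent_translate_general
    {V : Type} [AddCommGroup V] [Module ℝ V]
    (ρ : Matrix.SpecialLinearGroup (Fin 2) ℝ →* (V →ₗ[ℝ] V))
    -- `cp v λ` is the component `v_λ` of `v` in the `D`-eigenspace
    -- `V_λ = {w : ρ(exp(tD)) w = e^{λt} w for all t}`:
    (cp : V → ℝ → V)
    (hcp_mem : ∀ (v : V) (lam t : ℝ),
      ρ (dTorus t) (cp v lam) = Real.exp (lam * t) • cp v lam)
    (hcp_fin : ∀ v : V, (Function.support (cp v)).Finite)
    (hcp_sum : ∀ v : V, (∑ᶠ lam, cp v lam) = v)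
    (v : V) (hv : v ≠ 0) (r : ℝ) (hr : r ≠ 0) :
    -sSup {lam : ℝ | cp v lam ≠ 0} ≤ sSup {lam : ℝ | cp (ρ (uSL2 r) v) lam ≠ 0} := by
  have hmem : ∀ v lam, cp v lam ∈ weightSpace ρ lam := fun v lam =>
    mem_weightSpace.2 (hcp_mem v lam)
  have hne : ∀ {g x}, x ≠ 0 → ρ g x ≠ 0 := fun hx =>
    (map_ne_zero_iff _ (Representation.apply_bijective ρ _).1).2 hx
  set x := ρ (lSL2 r⁻¹) v
  have hwx : ρ (wSL2 r hr) x = ρ (lSL2 (-r⁻¹)) (ρ (uSL2 r) v) := by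
    have hinv : lSL2 (-r⁻¹) * lSL2 r⁻¹ = 1 := by rw [lSL2_mul_lSL2, neg_add_cancel, lSL2_zero]
    rw [uSL2_eq_lSL2_mul_wSL2_mul_lSL2 r hr, ← Module.End.mul_apply (ρ (lSL2 (-r⁻¹))), ← map_mul,
      ← mul_assoc, ← mul_assoc, hinv, one_mul, map_mul, Module.End.mul_apply]
  have hmin : sInf (Function.support (cp x)) ∈ Function.support (cp x) :=
    (Function.support_nonempty_of_finsum_ne_zero (by rw [hcp_sum]; exact hne hv)).csInf_mem
      (hcp_fin x)
  have hflip : -sInf (Function.support (cp x)) ∈ Function.support (cp (ρ (wSL2 r hr) x)) := by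
    rw [Function.mem_support, cp_wSL2 hmem hcp_fin hcp_sum hr]
    exact hne hmin
  calc -sSup (Function.support (cp v))
      ≤ -sSup (Function.support (cp x)) :=
        neg_le_neg (sSup_support_cp_lSL2_le hmem hcp_fin hcp_sum hv _)
    _ ≤ -sInf (Function.support (cp x)) :=
        neg_le_neg (le_csSup (hcp_fin x).bddAbove hmin)
    _ ≤ sSup (Function.support (cp (ρ (wSL2 r hr) x))) := le_csSup (hcp_fin _).bddAbove hflip
    _ ≤ sSup (Function.support (cp (ρ (uSL2 r) v))) :=
        hwx ▸ sSup_support_cp_lSL2_le hmem hcp_fin hcp_sum (hne hv) _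

theorem lambda_max_of_unipotent_translate
    {V : Type} [AddCommGroup V] [Module ℝ V] [FiniteDimensional ℝ V]
    (ρ : Matrix.SpecialLinearGroup (Fin 2) ℝ →* (V →ₗ[ℝ] V))
    -- `cp v λ` is the component `v_λ` of `v` in the `D`-eigenspace
    -- `V_λ = {w : ρ(exp(tD)) w = e^{λt} w for all t}`:
    (cp : V → ℝ → V)
    (hcp_mem : ∀ (v : V) (lam t : ℝ),
      ρ (dTorus t) (cp v lam) = Real.exp (lam * t) • cp v lam)
    (hcp_fin : ∀ v : V, (Function.support (cp v)).Finite)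
    (hcp_sum : ∀ v : V, (∑ᶠ lam, cp v lam) = v)
    (hcp_proj : ∀ (v : V) (lam : ℝ),
      (∀ t : ℝ, ρ (dTorus t) v = Real.exp (lam * t) • v) → cp v lam = v)
    (v : V) (hv : v ≠ 0) (r : ℝ) (hr : r ≠ 0) :
    -sSup {lam : ℝ | cp v lam ≠ 0} ≤ sSup {lam : ℝ | cp (ρ (uSL2 r) v) lam ≠ 0} :=
  lambda_max_of_unipotent_translate_general ρ cp hcp_mem hcp_fin hcp_sum v hv r hr

end
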